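/- Let θ be an irrational real number with −1/6 < θ < 0. Then the family of six Beatty sequences S(1/(1+θ), 0), S(1/(1+6θ), 0), S(−1/(2θ), 0), S(−1/(3θ), 0), S(−1/θ, 1/(6θ)), S(−1/θ, 5/(6θ)) is a 2-EEC. -/

import Mathlib

/-!
With `γ = 1 / α` and `δ = -β / α`, the multiplicity of `N` in `S(α, β)` is
`⌈(N + 1) γ + δ⌉ - ⌈N γ + δ⌉` as soon as `N γ + δ > 0`. So the total multiplicity of `N` in the
six sequences is `G (N + 1) - G N` with `G M = ∑ ⌈M γᵢ + δᵢ⌉`, where the frequencies are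
`γ = 1 + θ, 1 + 6θ, -2θ, -3θ, -θ, -θ` and the shifts `δ = 0, 0, 0, 0, 1/6, 5/6`.
Since the `γᵢ` sum to `2`, writing `x = M θ` gives `G M = 2 M + ⌈x⌉ + ⌈6x⌉ + ⌈-2x⌉ + ⌈-3x⌉ +
⌈1/6 - x⌉ + ⌈5/6 - x⌉`, and for irrational `x` the Hermite-type identity
`⌊x⌋ + ⌊6x⌋ = ⌊2x⌋ + ⌊3x⌋ + ⌊x + 1/6⌋ + ⌊x + 5/6⌋` makes the ceiling sum equal to `4`.
Hence `G M = 2 M + 4` and every `N ≥ 1` is covered exactly twice.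
-/

/-- The number of positive integers `n` with `⌊n·α + β⌋ = N`, i.e. the multiplicity
of `N` in the Beatty sequence `S(α,β)`. -/
noncomputable def beattyCount (α β : ℝ) (N : ℤ) : ℕ :=
  Nat.card {n : ℕ // 0 < n ∧ ⌊(n : ℝ) * α + β⌋ = N}

theorem beattyCount_eq_ceil_sub_ceil {α β : ℝ} (hα : 0 < α) {N : ℤ}
    (hN : 0 < (N - β) / α) :
    (beattyCount α β N : ℤ) = ⌈(N + 1 - β) / α⌉ - ⌈(N - β) / α⌉ := by
  have mem_iff (n : ℕ) : (0 < n ∧ ⌊(n : ℝ) * α + β⌋ = N) ↔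
      n ∈ Finset.Ico ⌈(N - β) / α⌉.toNat ⌈(N + 1 - β) / α⌉.toNat := by
    rw [Finset.mem_Ico, Int.toNat_le, Int.lt_toNat, Int.ceil_le, Int.lt_ceil, Int.floor_eq_iff,
      div_le_iff₀ hα, lt_div_iff₀ hα, Int.cast_natCast]
    constructor
    · rintro ⟨-, h₁, h₂⟩
      constructor <;> linarith
    · rintro ⟨h₁, h₂⟩
      have : (0 : ℝ) < n := lt_of_lt_of_le hN ((div_le_iff₀ hα).2 h₁)
      exact ⟨by exact_mod_cast this, by linarith, by linarith⟩
  have hb : ⌈(N - β) / α⌉ ≤ ⌈(N + 1 - β) / α⌉ :=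
    Int.ceil_mono (div_le_div_of_nonneg_right (by linarith) hα.le)
  rw [beattyCount, Nat.card_congr (Equiv.subtypeEquivRight mem_iff), Nat.card_eq_finsetCard,
    Nat.card_Ico]
  have := Int.ceil_pos.2 hN
  omega

theorem beattyCount_eq_ceil_sub_ceil_of_mul_eq_one {α β γ δ : ℝ} (hγ : 0 < γ) (hδ : 0 ≤ δ)
    (hα : γ * α = 1) (hβ : β = -δ * α) {N : ℤ} (hN : 0 < N) :
    (beattyCount α β N : ℤ) = ⌈((N + 1 : ℤ) : ℝ) * γ + δ⌉ - ⌈(N : ℝ) * γ + δ⌉ := by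
  have hα₀ : 0 < α := pos_of_mul_pos_right (hα ▸ one_pos) hγ.le
  have hγα : γ = 1 / α := eq_one_div_of_mul_eq_one_left hα
  have sub_div_eq (M : ℝ) : (M - β) / α = M * γ + δ := by
    rw [hβ, hγα]; field_simp; ring
  have hN' : (0 : ℝ) < N := by exact_mod_cast hN
  rw [beattyCount_eq_ceil_sub_ceil hα₀ (by rw [sub_div_eq]; positivity)]
  simp only [sub_div_eq, Int.cast_add, Int.cast_one]

/-- Every term depends only on `⌊6 x⌋`, which reduces the identity to one about division by `6`
in `ℤ`. -/
theorem floor_add_floor_six_mul {k : Type*} [Field k] [LinearOrder k] [IsOrderedRing k]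
    [FloorRing k] (x : k) :
    ⌊x⌋ + ⌊6 * x⌋ = ⌊2 * x⌋ + ⌊3 * x⌋ + ⌊x + 1 / 6⌋ + ⌊x + 5 / 6⌋ := by
  have floor_div (y : k) (n : ℕ) : ⌊y / n⌋ = ⌊y⌋ / n := Int.floor_div_natCast y n
  obtain ⟨y, rfl⟩ : ∃ y, x = y / (6 : ℕ) := ⟨6 * x, by push_cast; ring⟩
  rw [show 6 * (y / (6 : ℕ)) = y by push_cast; ring,
    show 2 * (y / (6 : ℕ)) = y / (3 : ℕ) by push_cast; ring,
    show 3 * (y / (6 : ℕ)) = y / (2 : ℕ) by push_cast; ring,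
    show y / (6 : ℕ) + 1 / 6 = (y + 1) / (6 : ℕ) by push_cast; ring,
    show y / (6 : ℕ) + 5 / 6 = (y + (5 : ℤ)) / (6 : ℕ) by push_cast; ring]
  simp only [floor_div, Int.floor_add_one, Int.floor_add_intCast]
  generalize ⌊y⌋ = m
  have := Int.emod_nonneg m (by norm_num : (6 : ℤ) ≠ 0)
  have := Int.emod_lt_of_pos m (by norm_num : (0 : ℤ) < 6)
  interval_cases h : m % 6 <;> omega

theorem Irrational.six_ceil_sum_eq_four {x : ℝ} (hx : Irrational x) :
    ⌈x⌉ + ⌈6 * x⌉ + ⌈-(2 * x)⌉ + ⌈-(3 * x)⌉ + ⌈-x + 1 / 6⌉ + ⌈-x + 5 / 6⌉ = 4 := by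
  have ceil_eq {y : ℝ} (hy : Irrational y) : ⌈y⌉ = ⌊y⌋ + 1 :=
    (Int.ceil_eq_floor_add_one_iff_notMem y).2 fun ⟨z, hz⟩ => hy.ne_int z hz.symm
  have h6x : Irrational (6 * x) := by exact_mod_cast hx.natCast_mul (m := 6) (by norm_num)
  rw [ceil_eq hx, ceil_eq h6x,
    show -x + 1 / 6 = -(x + 5 / 6) + (1 : ℤ) by push_cast; ring,
    show -x + 5 / 6 = -(x + 1 / 6) + (1 : ℤ) by push_cast; ring]
  simp only [Int.ceil_add_intCast, Int.ceil_neg]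
  linarith [floor_add_floor_six_mul x]

theorem six_ceil_sum_int_mul_eq {θ : ℝ} (hθ : Irrational θ) {M : ℤ} (hM : M ≠ 0) :
    ⌈(M : ℝ) * (1 + θ)⌉ + ⌈(M : ℝ) * (1 + 6 * θ)⌉ + ⌈(M : ℝ) * -(2 * θ)⌉ +
      ⌈(M : ℝ) * -(3 * θ)⌉ + ⌈(M : ℝ) * -θ + 1 / 6⌉ + ⌈(M : ℝ) * -θ + 5 / 6⌉ = 2 * M + 4 := by
  have h := (hθ.intCast_mul hM).six_ceil_sum_eq_four
  rw [show (M : ℝ) * (1 + θ) = M + M * θ by ring,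
    show (M : ℝ) * (1 + 6 * θ) = M + 6 * (M * θ) by ring,
    show (M : ℝ) * -(2 * θ) = -(2 * (M * θ)) by ring,
    show (M : ℝ) * -(3 * θ) = -(3 * (M * θ)) by ring, mul_neg]
  simp only [Int.ceil_intCast_add]
  linarith

theorem six_sequence_irreducible_two_EEC (θ : ℝ) (hirr : Irrational θ)
    (h1 : -(1 / 6) < θ) (h2 : θ < 0) :
    ∃ N₀ : ℤ, ∀ N : ℤ, N ≥ N₀ →
      beattyCount (1 / (1 + θ)) 0 N +
      beattyCount (1 / (1 + 6 * θ)) 0 N +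
      beattyCount (-(1 / (2 * θ))) 0 N +
      beattyCount (-(1 / (3 * θ))) 0 N +
      beattyCount (-(1 / θ)) (1 / (6 * θ)) N +
      beattyCount (-(1 / θ)) (5 / (6 * θ)) N = 2 := by
  refine ⟨1, fun N hN => ?_⟩
  have hN : 0 < N := hN
  have hθ : θ ≠ 0 := h2.ne
  have h1θ : 1 + θ ≠ 0 := by linarith
  have h6θ : 1 + 6 * θ ≠ 0 := by linarith
  zify
  rw [beattyCount_eq_ceil_sub_ceil_of_mul_eq_one (γ := 1 + θ) (δ := 0) (by linarith) le_rfl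
      (by field_simp) (by simp) hN,
    beattyCount_eq_ceil_sub_ceil_of_mul_eq_one (γ := 1 + 6 * θ) (δ := 0) (by linarith) le_rfl
      (by field_simp) (by simp) hN,
    beattyCount_eq_ceil_sub_ceil_of_mul_eq_one (γ := -(2 * θ)) (δ := 0) (by linarith) le_rfl
      (by field_simp) (by simp) hN,
    beattyCount_eq_ceil_sub_ceil_of_mul_eq_one (γ := -(3 * θ)) (δ := 0) (by linarith) le_rfl
      (by field_simp) (by simp) hN,
    beattyCount_eq_ceil_sub_ceil_of_mul_eq_one (γ := -θ) (δ := 1 / 6) (by linarith) (by norm_num)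
      (by field_simp) (by field_simp) hN,
    beattyCount_eq_ceil_sub_ceil_of_mul_eq_one (γ := -θ) (δ := 5 / 6) (by linarith) (by norm_num)
      (by field_simp) (by field_simp) hN]
  simp only [add_zero]
  linarith [six_ceil_sum_int_mul_eq hirr hN.ne',
    six_ceil_sum_int_mul_eq hirr (M := N + 1) (by omega)]
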